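/- Assume t = d and that n_1, …, n_d are linearly independent (the toric algebra is simplicial). Let v, w ∈ ℝ^d, and let v₀, w₀ ∈ ℝ^d be the unique points with n_i(v₀) = ⌈n_i(v)⌉ and n_i(w₀) = ⌈n_i(w)⌉ for all i = 1,…,d. Then {f ∈ L : f·A_v ⊆ A_w} = A_{w₀ − v₀} as R-submodules of L; in particular Hom_R(A_v, A_w) is isomorphic as an R-module to the conic module A_{w₀ − v₀}. -/

import Mathlib

/-!
Since the monomials `x^m` already span `A_v` over `k`, `A_v` is the set of Laurent polynomials
supported on `(C + v) ∩ ℤ^d`, and `f · A_v ⊆ A_w` says `supp f + (C + v) ∩ ℤ^d ⊆ C + w`. As the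
`n_i` are integral on `ℤ^d`, `C + v` and `C + v₀` have the same lattice points. In the simplicial
case the integer matrix `M` of the `n_i` is invertible over `ℚ`, so `n(ℤ^d)` contains
`(det M)² ℤ^d` (via the adjugate); with primitivity this gives, for each `i`, a lattice point of
`C + v₀` on the facet `n_i = n_i(v₀)`, and adding it to `μ ∈ supp f` forces
`n_i(μ) ≥ n_i(w₀) - n_i(v₀)`.

For the `Hom` statement, every monomial is `(r' / r) · x^s` for monomials `r, r' ∈ R` and a fixed
`x^s ∈ A_v`, so an `R`-linear `φ : A_v → A_w` is multiplication by `φ(x^s) · x^{-s}`.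
-/

open Set

noncomputable section

/-- The embedding of the lattice `ℤ^d` into `ℝ^d`. -/
def ιZ (d : ℕ) (m : Fin d → ℤ) : Fin d → ℝ := fun j => (m j : ℝ)

/-- The lattice points of the translated cone `C + v`, where
`C = {x | ∀ i, 0 ≤ n i x}`. -/
def latticePts {d t : ℕ} (n : Fin t → ((Fin d → ℝ) →ₗ[ℝ] ℝ)) (v : Fin d → ℝ) :
    Set (Fin d → ℤ) :=
  {m | ∀ i, 0 ≤ n i (ιZ d m - v)}

/-- The toric algebra `R = k[C ∩ ℤ^d]`: the `k`-subalgebra of the Laurent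
polynomial algebra `L = AddMonoidAlgebra k (Fin d → ℤ)` spanned (equivalently,
generated, since the monomial set is closed under multiplication and contains `1`)
by the monomials `x^m` with `m ∈ C ∩ ℤ^d`. -/
def toricR (k : Type) [Field k] (d t : ℕ) (n : Fin t → ((Fin d → ℝ) →ₗ[ℝ] ℝ)) :
    Subalgebra k (AddMonoidAlgebra k (Fin d → ℤ)) :=
  Algebra.adjoin k
    {f | ∃ m : Fin d → ℤ, (∀ i, 0 ≤ n i (ιZ d m)) ∧ f = AddMonoidAlgebra.single m 1}

/-- The conic module `A_v`: the `R`-submodule of `L` spanned by the monomials `x^m`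
with `m ∈ (C + v) ∩ ℤ^d`. -/
def conicA (k : Type) [Field k] (d t : ℕ) (n : Fin t → ((Fin d → ℝ) →ₗ[ℝ] ℝ))
    (v : Fin d → ℝ) :
    Submodule ↥(toricR k d t n) (AddMonoidAlgebra k (Fin d → ℤ)) :=
  Submodule.span ↥(toricR k d t n)
    {f | ∃ m : Fin d → ℤ, (∀ i, 0 ≤ n i (ιZ d m - v)) ∧ f = AddMonoidAlgebra.single m 1}

lemma ιZ_add (d : ℕ) (a b : Fin d → ℤ) : ιZ d (a + b) = ιZ d a + ιZ d b := by
  funext j; simp [ιZ]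

lemma ιZ_zero (d : ℕ) : ιZ d 0 = 0 := by
  funext j; simp [ιZ]

lemma ιZ_sub (d : ℕ) (a b : Fin d → ℤ) : ιZ d (a - b) = ιZ d a - ιZ d b := by
  funext j; simp [ιZ]

section Lattice

variable {d t : ℕ} (n : Fin t → ((Fin d → ℝ) →ₗ[ℝ] ℝ))

lemma mem_latticePts_iff {v : Fin d → ℝ} {m : Fin d → ℤ} :
    m ∈ latticePts n v ↔ ∀ i, n i v ≤ n i (ιZ d m) := by
  simp [latticePts]

lemma add_mem_latticePts {u v : Fin d → ℝ} {a b : Fin d → ℤ} (ha : a ∈ latticePts n u)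
    (hb : b ∈ latticePts n v) : a + b ∈ latticePts n (u + v) := by
  rw [mem_latticePts_iff] at *
  intro i
  rw [ιZ_add, map_add, map_add]
  exact add_le_add (ha i) (hb i)

open scoped Pointwise in
lemma latticePts_add_subset (u v : Fin d → ℝ) :
    latticePts n u + latticePts n v ⊆ latticePts n (u + v) :=
  Set.add_subset_iff.2 fun _ ha _ hb => add_mem_latticePts n ha hb

lemma latticePts_eq_of_apply_eq_ceil (hint : ∀ i (m : Fin d → ℤ), ∃ z : ℤ, n i (ιZ d m) = z)
    {v v₀ : Fin d → ℝ} (hv₀ : ∀ i, n i v₀ = (⌈n i v⌉ : ℝ)) :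
    latticePts n v = latticePts n v₀ := by
  ext m
  simp only [mem_latticePts_iff, hv₀]
  refine forall_congr' fun i => ?_
  obtain ⟨z, hz⟩ := hint i m
  rw [hz, Int.cast_le, Int.ceil_le]

end Lattice

section Simplicial

open Matrix

variable {d : ℕ} (n : Fin d → ((Fin d → ℝ) →ₗ[ℝ] ℝ))

lemma exists_intMatrix_apply_ιZ (hint : ∀ i (m : Fin d → ℤ), ∃ z : ℤ, n i (ιZ d m) = z) :
    ∃ M : Matrix (Fin d) (Fin d) ℤ, ∀ m i, n i (ιZ d m) = (M *ᵥ m) i := by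
  choose M hM using fun i j => hint i (fun l => if j = l then 1 else 0)
  have hM' : ∀ i j, n i (fun l => if j = l then 1 else 0) = M i j := fun i j => by
    rw [← hM]; congr 1; ext l; simp [ιZ, apply_ite]
  refine ⟨of M, fun m i => ?_⟩
  rw [LinearMap.pi_apply_eq_sum_univ]
  simp [ιZ, hM', mulVec, dotProduct, mul_comm]

lemma det_ne_zero_of_linearIndependent {M : Matrix (Fin d) (Fin d) ℤ}
    (hM : ∀ m i, n i (ιZ d m) = (M *ᵥ m) i) (hsimp : LinearIndependent ℝ n) : M.det ≠ 0 := by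
  classical
  intro hdet
  have hcast : (M.map (Int.cast : ℤ → ℝ)).det = 0 := by
    rw [← Int.cast_det, hdet, Int.cast_zero]
  obtain ⟨c, hc0, hc⟩ := exists_vecMul_eq_zero_iff.mpr hcast
  have hentry : ∀ i j, n i (Pi.single j 1) = M i j := fun i j => by
    have := hM (Pi.single j 1) i
    rwa [mulVec_single_one, show ιZ d (Pi.single j 1) = Pi.single j 1 by
      ext l; simp [ιZ, Pi.single_apply]] at this
  have hsum : ∑ i, c i • n i = 0 := (Pi.basisFun ℝ (Fin d)).ext fun j => by
    simpa [vecMul, dotProduct, hentry] using congrFun hc j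
  exact hc0 (funext (Fintype.linearIndependent_iff.mp hsimp c hsum))

lemma exists_pos_forall_exists_apply_eq_mul
    (hint : ∀ i (m : Fin d → ℤ), ∃ z : ℤ, n i (ιZ d m) = z) (hsimp : LinearIndependent ℝ n) :
    ∃ D : ℤ, 0 < D ∧ ∀ K : Fin d → ℤ, ∃ m, ∀ i, n i (ιZ d m) = D * K i := by
  obtain ⟨M, hM⟩ := exists_intMatrix_apply_ιZ n hint
  have hdet := det_ne_zero_of_linearIndependent n hM hsimp
  refine ⟨M.det ^ 2, by positivity, fun K => ⟨M.det • M.adjugate *ᵥ K, fun i => ?_⟩⟩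
  rw [hM, mulVec_smul, mulVec_mulVec, mul_adjugate]
  simp [sq, mul_assoc]

lemma exists_lattice_point_ge_on_eq_off
    (hint : ∀ i (m : Fin d → ℤ), ∃ z : ℤ, n i (ιZ d m) = z) (hsimp : LinearIndependent ℝ n)
    (m₀ : Fin d → ℤ) (s : Set (Fin d)) (c : Fin d → ℝ) :
    ∃ m, (∀ i ∉ s, n i (ιZ d m) = n i (ιZ d m₀)) ∧ ∀ i ∈ s, c i ≤ n i (ιZ d m) := by
  classical
  obtain ⟨D, hD, hK⟩ := exists_pos_forall_exists_apply_eq_mul n hint hsimp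
  have hD' : (0 : ℝ) < D := by exact_mod_cast hD
  obtain ⟨m', hm'⟩ := hK fun i => if i ∈ s then ⌈(c i - n i (ιZ d m₀)) / D⌉ else 0
  refine ⟨m₀ + m', fun i hi => by simp [ιZ_add, hm', hi], fun i hi => ?_⟩
  rw [ιZ_add, map_add, hm', if_pos hi]
  calc c i = n i (ιZ d m₀) + D * ((c i - n i (ιZ d m₀)) / D) := by field_simp; ring
    _ ≤ _ := by gcongr; exact Int.le_ceil _

lemma exists_lattice_point_ge
    (hint : ∀ i (m : Fin d → ℤ), ∃ z : ℤ, n i (ιZ d m) = z) (hsimp : LinearIndependent ℝ n)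
    (c : Fin d → ℝ) : ∃ m, ∀ i, c i ≤ n i (ιZ d m) := by
  obtain ⟨m, -, hm⟩ := exists_lattice_point_ge_on_eq_off n hint hsimp 0 univ c
  exact ⟨m, fun i => hm i (mem_univ i)⟩

lemma exists_mem_latticePts_apply_eq
    (hint : ∀ i (m : Fin d → ℤ), ∃ z : ℤ, n i (ιZ d m) = z)
    (hprim : ∀ i (z : ℤ), ∃ m : Fin d → ℤ, n i (ιZ d m) = z) (hsimp : LinearIndependent ℝ n)
    {v : Fin d → ℝ} {i : Fin d} {z : ℤ} (hz : n i v ≤ z) :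
    ∃ m ∈ latticePts n v, n i (ιZ d m) = z := by
  obtain ⟨m₀, hm₀⟩ := hprim i z
  obtain ⟨m, hmi, hm⟩ := exists_lattice_point_ge_on_eq_off n hint hsimp m₀ {i}ᶜ (fun j => n j v)
  refine ⟨m, (mem_latticePts_iff n).2 fun j => ?_, (hmi i (by simp)).trans hm₀⟩
  by_cases hj : j = i
  · subst hj; rw [hmi j (by simp), hm₀]; exact hz
  · exact hm j hj

lemma mem_latticePts_sub_iff
    (hint : ∀ i (m : Fin d → ℤ), ∃ z : ℤ, n i (ιZ d m) = z)
    (hprim : ∀ i (z : ℤ), ∃ m : Fin d → ℤ, n i (ιZ d m) = z) (hsimp : LinearIndependent ℝ n)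
    {v : Fin d → ℝ} (hv : ∀ i, ∃ z : ℤ, n i v = z) (w : Fin d → ℝ) (μ : Fin d → ℤ) :
    μ ∈ latticePts n (w - v) ↔ ∀ m ∈ latticePts n v, μ + m ∈ latticePts n w := by
  refine ⟨fun hμ m hm => sub_add_cancel w v ▸ add_mem_latticePts n hμ hm, fun h => ?_⟩
  refine (mem_latticePts_iff n).2 fun i => ?_
  obtain ⟨z, hz⟩ := hv i
  obtain ⟨m, hm, hmi⟩ := exists_mem_latticePts_apply_eq n hint hprim hsimp hz.le
  have := (mem_latticePts_iff n).1 (h m hm) i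
  rw [ιZ_add, map_add, hmi, ← hz] at this
  rw [map_sub]
  linarith

end Simplicial

namespace AddMonoidAlgebra

variable {k G : Type*} [Semiring k]

lemma single_one_mem_supported {s : Set G} {m : G} (hm : m ∈ s) :
    single m (1 : k) ∈ supported k k s := by
  rw [supported_eq_span_single]
  exact Submodule.subset_span ⟨m, hm, rfl⟩

open scoped Pointwise in
lemma mul_mem_supported_add [Add G] {s t : Set G} {x y : AddMonoidAlgebra k G}
    (hx : x ∈ supported k k s) (hy : y ∈ supported k k t) : x * y ∈ supported k k (s + t) := by
  classical
  rw [mem_supported] at *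
  refine (Finset.coe_subset.2 (support_coeff_mul_subset x y)).trans ?_
  rw [Finset.coe_add]
  exact Set.add_subset_add hx hy

lemma isUnit_single_one [AddGroup G] (m : G) : IsUnit (single m (1 : k)) :=
  ⟨⟨single m 1, single (-m) 1, by simp [single_mul_single, one_def],
    by simp [single_mul_single, one_def]⟩, rfl⟩

end AddMonoidAlgebra

open AddMonoidAlgebra

section Conic

variable {k : Type} [Field k] {d t : ℕ} (n : Fin t → ((Fin d → ℝ) →ₗ[ℝ] ℝ))

lemma conicA_eq_span (v : Fin d → ℝ) :
    conicA k d t n v =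
      Submodule.span (toricR k d t n) ((fun m => single m 1) '' latticePts n v) := by
  rw [conicA]
  congr 1
  ext f
  simp [latticePts, eq_comm]

lemma single_mem_conicA {v : Fin d → ℝ} {m : Fin d → ℤ} (hm : m ∈ latticePts n v) :
    single m (1 : k) ∈ conicA k d t n v :=
  Submodule.subset_span ⟨m, hm, rfl⟩

lemma single_mem_toricR {m : Fin d → ℤ} (hm : m ∈ latticePts n 0) :
    single m (1 : k) ∈ toricR k d t n :=
  Algebra.subset_adjoin ⟨m, by simpa [latticePts] using hm, rfl⟩

lemma toricR_le_supported : (toricR k d t n).toSubmodule ≤ supported k k (latticePts n 0) := by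
  let S := (supported k k (latticePts n 0)).toSubalgebra
    (single_one_mem_supported (by simp [latticePts, ιZ_zero]))
    fun x y hx hy => supported_mono ((latticePts_add_subset n 0 0).trans (by rw [add_zero]))
      (mul_mem_supported_add hx hy)
  refine Algebra.adjoin_le (S := S) ?_
  rintro _ ⟨m, hm, rfl⟩
  exact single_one_mem_supported (by simpa [latticePts] using hm)

lemma mem_conicA_iff {v : Fin d → ℝ} {f : AddMonoidAlgebra k (Fin d → ℤ)} :
    f ∈ conicA k d t n v ↔ f ∈ supported k k (latticePts n v) := by
  let A : Submodule (toricR k d t n) (AddMonoidAlgebra k (Fin d → ℤ)) :=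
    { toAddSubmonoid := (supported k k (latticePts n v)).toAddSubmonoid
      smul_mem' := fun r f hf => by
        have := supported_mono (latticePts_add_subset n 0 v)
          (mul_mem_supported_add (toricR_le_supported n r.2) hf)
        rwa [zero_add] at this }
  refine ⟨fun hf => ?_, fun hf => ?_⟩
  · refine (Submodule.span_le (p := A)).2 ?_ hf
    rintro _ ⟨m, hm, rfl⟩
    exact single_one_mem_supported hm
  · rw [supported_eq_span_single] at hf
    rw [conicA_eq_span]
    exact Submodule.span_le_restrictScalars k _ _ hf

lemma mul_mem_conicA_iff {v w : Fin d → ℝ} (f : AddMonoidAlgebra k (Fin d → ℤ)) :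
    (∀ a ∈ conicA k d t n v, f * a ∈ conicA k d t n w) ↔
      ∀ μ ∈ f.coeff.support, ∀ m ∈ latticePts n v, μ + m ∈ latticePts n w := by
  simp only [mem_conicA_iff, mem_supported]
  refine ⟨fun h μ hμ m hm => h (single m 1) (mem_supported.1 (single_one_mem_supported hm)) ?_,
    fun h a ha => ?_⟩
  · rw [support_coeff_mul_single f 1 (by simp)]
    simpa using hμ
  · exact mem_supported.1 <| supported_mono (Set.add_subset_iff.2 h)
      (mul_mem_supported_add (mem_supported.2 subset_rfl) (mem_supported.2 ha))

end Conic

section Colon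

variable {R L : Type*} [CommRing R] [CommRing L] [Algebra R L] {M N : Submodule R L}

lemma LinearMap.mul_apply_comm_of_span_eq {G : Set L} (hM : Submodule.span R G = M) {s : L}
    (hs : s ∈ M) (hG : ∀ a ∈ G, ∃ r r' : R, IsUnit (algebraMap R L r) ∧ r • a = r' • s)
    (φ : M →ₗ[R] N) (a : M) : s * φ a = a * φ ⟨s, hs⟩ := by
  subst hM
  obtain ⟨a, ha⟩ := a
  induction ha using Submodule.span_induction with
  | mem a ha =>
    obtain ⟨r, r', hr, hrs⟩ := hG a ha
    have hφ : r • (φ ⟨a, Submodule.subset_span ha⟩ : L) = r' • (φ ⟨s, hs⟩ : L) := by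
      rw [← N.coe_smul, ← N.coe_smul, ← map_smul, ← map_smul]
      congr 2
      exact Subtype.ext hrs
    apply hr.mul_left_cancel
    simp only [← Algebra.smul_def]
    calc r • (s * φ ⟨a, _⟩) = s * (r' • φ ⟨s, hs⟩) := by rw [← hφ, mul_smul_comm]
      _ = r • (a * φ ⟨s, hs⟩) := by rw [mul_smul_comm, ← smul_mul_assoc, ← hrs, smul_mul_assoc]
  | zero =>
    rw [show (⟨0, _⟩ : Submodule.span R G) = 0 from rfl, map_zero, ZeroMemClass.coe_zero, mul_zero,
      ZeroMemClass.coe_zero, zero_mul]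
  | add a b ha hb iha ihb =>
    rw [show (⟨a + b, _⟩ : Submodule.span R G) = ⟨a, ha⟩ + ⟨b, hb⟩ from rfl, map_add,
      Submodule.coe_add, mul_add, iha, ihb, ← add_mul]
    rfl
  | smul r a ha ih =>
    rw [show (⟨r • a, _⟩ : Submodule.span R G) = r • ⟨a, ha⟩ from rfl, map_smul,
      Submodule.coe_smul, mul_smul_comm, ih, ← smul_mul_assoc]
    rfl

lemma nonempty_linearEquiv_of_mem_iff {B : Submodule R L}
    (hB : ∀ f, f ∈ B ↔ ∀ a ∈ M, f * a ∈ N) {s : L} (hsu : IsUnit s) (hs : s ∈ M)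
    (hcomm : ∀ (φ : M →ₗ[R] N) (a : M), s * φ a = a * φ ⟨s, hs⟩) :
    Nonempty ((M →ₗ[R] N) ≃ₗ[R] B) := by
  let Φ : B →ₗ[R] M →ₗ[R] N :=
    { toFun := fun f => (LinearMap.mulLeft R (f : L)).restrict fun a ha => (hB f).1 f.2 a ha
      map_add' := fun f g => LinearMap.ext fun a => Subtype.ext (add_mul _ _ _)
      map_smul' := fun r f => LinearMap.ext fun a => Subtype.ext (smul_mul_assoc _ _ _) }
  have hΦ : ∀ f a, (Φ f a : L) = f * a := fun _ _ => rfl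
  refine ⟨(LinearEquiv.ofBijective Φ ⟨fun f g hfg => ?_, fun φ => ?_⟩).symm⟩
  · have := congrArg (fun ψ => (ψ ⟨s, hs⟩ : L)) hfg
    simp only [hΦ] at this
    exact Subtype.ext (hsu.mul_right_cancel this)
  · have hφ : ∀ a : M, ((hsu.unit⁻¹ : Lˣ) : L) * φ ⟨s, hs⟩ * a = φ a := fun a => by
      rw [mul_assoc, mul_comm _ (a : L), ← hcomm, ← mul_assoc, hsu.val_inv_mul, one_mul]
    exact ⟨⟨_, (hB _).2 fun a ha => hφ ⟨a, ha⟩ ▸ (φ ⟨a, ha⟩).2⟩,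
      LinearMap.ext fun a => Subtype.ext (hφ a)⟩

end Colon

lemma exists_smul_single_eq_smul_single {k : Type} [Field k] {d : ℕ}
    (n : Fin d → ((Fin d → ℝ) →ₗ[ℝ] ℝ))
    (hint : ∀ i (m : Fin d → ℤ), ∃ z : ℤ, n i (ιZ d m) = z) (hsimp : LinearIndependent ℝ n)
    (m m' : Fin d → ℤ) :
    ∃ r r' : toricR k d d n, IsUnit (algebraMap _ (AddMonoidAlgebra k (Fin d → ℤ)) r) ∧
      r • single m (1 : k) = r' • single m' 1 := by
  obtain ⟨c, hc⟩ := exists_lattice_point_ge n hint hsimp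
    fun i => max 0 (n i (ιZ d m') - n i (ιZ d m))
  have hc₀ : c ∈ latticePts n 0 := (mem_latticePts_iff n).2 fun i => by
    simpa using (le_max_left _ _).trans (hc i)
  have hc' : c + m - m' ∈ latticePts n 0 := (mem_latticePts_iff n).2 fun i => by
    have := (le_max_right _ _).trans (hc i)
    simp only [map_zero, ιZ_sub, ιZ_add, map_sub, map_add]
    linarith
  refine ⟨⟨_, single_mem_toricR n hc₀⟩, ⟨_, single_mem_toricR n hc'⟩, isUnit_single_one c, ?_⟩
  simp only [Subalgebra.smul_def, smul_eq_mul, single_mul_single, sub_add_cancel]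

theorem stmt_17_general
    (d : ℕ)
    (n : Fin d → ((Fin d → ℝ) →ₗ[ℝ] ℝ))
    (hint : ∀ i (m : Fin d → ℤ), ∃ z : ℤ, n i (ιZ d m) = z)
    (hprim : ∀ i (z : ℤ), ∃ m : Fin d → ℤ, n i (ιZ d m) = z)
    (hsimp : LinearIndependent ℝ n)
    (k : Type) [Field k]
    (v w v₀ w₀ : Fin d → ℝ)
    (hv₀ : ∀ i, n i v₀ = (⌈n i v⌉ : ℝ)) (hw₀ : ∀ i, n i w₀ = (⌈n i w⌉ : ℝ)) :
    {f : AddMonoidAlgebra k (Fin d → ℤ) |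
        ∀ a ∈ conicA k d d n v, f * a ∈ conicA k d d n w} =
      (conicA k d d n (w₀ - v₀) : Set (AddMonoidAlgebra k (Fin d → ℤ))) ∧
    Nonempty ((↥(conicA k d d n v) →ₗ[↥(toricR k d d n)] ↥(conicA k d d n w))
      ≃ₗ[↥(toricR k d d n)] ↥(conicA k d d n (w₀ - v₀))) := by
  have hcolon : ∀ f, f ∈ conicA k d d n (w₀ - v₀) ↔
      ∀ a ∈ conicA k d d n v, f * a ∈ conicA k d d n w := fun f => by
    rw [mul_mem_conicA_iff, mem_conicA_iff, mem_supported,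
      latticePts_eq_of_apply_eq_ceil n hint hv₀, latticePts_eq_of_apply_eq_ceil n hint hw₀]
    simp only [Set.subset_def, Finset.mem_coe,
      mem_latticePts_sub_iff n hint hprim hsimp fun i => ⟨_, hv₀ i⟩]
  obtain ⟨s, hs⟩ := exists_lattice_point_ge n hint hsimp fun i => n i v
  have hsv : s ∈ latticePts n v := (mem_latticePts_iff n).2 hs
  have hcomm := LinearMap.mul_apply_comm_of_span_eq (N := conicA k d d n w)
    (conicA_eq_span n v).symm (single_mem_conicA n hsv) (by
      rintro _ ⟨m, -, rfl⟩
      exact exists_smul_single_eq_smul_single n hint hsimp m s)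
  exact ⟨Set.ext fun f => (hcolon f).symm,
    nonempty_linearEquiv_of_mem_iff hcolon (isUnit_single_one s) _ hcomm⟩

/-- in the simplicial case (`t = d`, `n` linearly independent), with
`v₀, w₀` the unique points with `n i v₀ = ⌈n i v⌉` and `n i w₀ = ⌈n i w⌉`, one has
`{f ∈ L : f · A_v ⊆ A_w} = A_{w₀ - v₀}` as subsets of `L`; in particular
`Hom_R(A_v, A_w)` is isomorphic as an `R`-module to the conic module `A_{w₀ - v₀}`. -/
theorem stmt_17
    (d : ℕ) (hd : 1 ≤ d)
    (n : Fin d → ((Fin d → ℝ) →ₗ[ℝ] ℝ))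
    (hne : ∀ i, n i ≠ 0)
    (hint : ∀ i (m : Fin d → ℤ), ∃ z : ℤ, n i (ιZ d m) = z)
    (hprim : ∀ i (z : ℤ), ∃ m : Fin d → ℤ, n i (ιZ d m) = z)
    (C : Set (Fin d → ℝ)) (hC : C = {x | ∀ i, 0 ≤ n i x})
    (hfull : (interior C).Nonempty)
    (hpointed : Submodule.span ℝ (Set.range n) = ⊤)
    (hirr : ∀ i, C ⊂ {x | ∀ j, j ≠ i → 0 ≤ n j x})
    (hsimp : LinearIndependent ℝ n)
    (k : Type) [Field k]
    (v w v₀ w₀ : Fin d → ℝ)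
    (hv₀ : ∀ i, n i v₀ = (⌈n i v⌉ : ℝ)) (hw₀ : ∀ i, n i w₀ = (⌈n i w⌉ : ℝ)) :
    {f : AddMonoidAlgebra k (Fin d → ℤ) |
        ∀ a ∈ conicA k d d n v, f * a ∈ conicA k d d n w} =
      (conicA k d d n (w₀ - v₀) : Set (AddMonoidAlgebra k (Fin d → ℤ))) ∧
    Nonempty ((↥(conicA k d d n v) →ₗ[↥(toricR k d d n)] ↥(conicA k d d n w))
      ≃ₗ[↥(toricR k d d n)] ↥(conicA k d d n (w₀ - v₀))) :=
  stmt_17_general d n hint hprim hsimp k v w v₀ w₀ hv₀ hw₀
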